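/- arXiv:1711.04108 — 2 statements merged into one kernel-verified Lean document; each statement's English description precedes it below -/
import Mathlib

section
/- Let d ∈ ℕ^I be nonzero and let θ, ω ∈ ℝ^I lie in the same facet of the hyperplane arrangement ℋ(d), i.e. sgn(f(d,e)(θ)) = sgn(f(d,e)(ω)) for every e ∈ S_d. Let M be an object of 𝒜 with φ(M) = d. Then M is θ-semistable if and only if M is ω-semistable, and M is θ-stable if and only if M is ω-stable. -/
open CategoryTheory CategoryTheory.Limits

variable {𝒜 : Type*} [Category 𝒜] [Abelian 𝒜] {I : Type*} [Fintype I]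

/-- The `θ`-degree of an object `M`: `deg_θ(M) = ∑ i, θ i * φ i M`. -/
noncomputable def degTheta (φ : I → 𝒜 → ℤ) (θ : I → ℝ) (M : 𝒜) : ℝ :=
  ∑ i, θ i * (φ i M : ℝ)

/-- The rank of an object `M`: `rk(M) = ∑ i, φ i M`. -/
def rkPhi (φ : I → 𝒜 → ℤ) (M : 𝒜) : ℤ := ∑ i, φ i M

/-- The `θ`-slope of an object `M`: `μ_θ(M) = deg_θ(M) / rk(M)`. -/
noncomputable def muSlope (φ : I → 𝒜 → ℤ) (θ : I → ℝ) (M : 𝒜) : ℝ :=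
  degTheta φ θ M / (rkPhi φ M : ℝ)

/-- The family `φ` is additive on short exact sequences. -/
def IsAdditiveFamily (φ : I → 𝒜 → ℤ) : Prop :=
  ∀ i, ∀ S : ShortComplex 𝒜, S.ShortExact → φ i S.X₂ = φ i S.X₁ + φ i S.X₃

/-- The family `φ` is positive. -/
def IsPositiveFamily (φ : I → 𝒜 → ℤ) : Prop :=
  (∀ i, ∀ M : 𝒜, 0 ≤ φ i M) ∧ ∀ M : 𝒜, ¬ IsZero M → ∃ i, 0 < φ i M

/-- `M` is `θ`-semistable: it is nonzero and every nonzero proper subobject has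
slope at most that of `M`. -/
noncomputable def Semistable (φ : I → 𝒜 → ℤ) (θ : I → ℝ) (M : 𝒜) : Prop :=
  ¬ IsZero M ∧ ∀ N : Subobject M, N ≠ ⊥ → N ≠ ⊤ →
    muSlope φ θ ((N : 𝒜)) ≤ muSlope φ θ M

/-- `M` is `θ`-stable. -/
noncomputable def Stable (φ : I → 𝒜 → ℤ) (θ : I → ℝ) (M : 𝒜) : Prop :=
  ¬ IsZero M ∧ ∀ N : Subobject M, N ≠ ⊥ → N ≠ ⊤ →
    muSlope φ θ ((N : 𝒜)) < muSlope φ θ M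


/-- The slope `μ_θ(d)` of a dimension vector `d ∈ ℕ^I`. -/
noncomputable def muSlopeVec (θ : I → ℝ) (d : I → ℕ) : ℝ :=
  (∑ i, θ i * (d i : ℝ)) / (∑ i, (d i : ℝ))

/-- `M` has dimension vector `d`, i.e. `φ i M = d i` for all `i`. -/
def HasDimVec (φ : I → 𝒜 → ℤ) (M : 𝒜) (d : I → ℕ) : Prop :=
  ∀ i, φ i M = (d i : ℤ)

/-- `e ∈ S_d`: `e ∈ ℕ^I \ ℚd` and there exist an object `M` with `φ(M) = d` and a
subobject `N` of `M` with `φ(N) = e`. -/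
def MemSd (φ : I → 𝒜 → ℤ) (d e : I → ℕ) : Prop :=
  (¬ ∃ q : ℚ, ∀ i, (e i : ℚ) = q * (d i : ℚ)) ∧
  ∃ (M : 𝒜) (N : Subobject M), HasDimVec φ M d ∧ HasDimVec φ ((N : 𝒜)) e

/-- `θ` and `ω` lie in the same facet of the hyperplane arrangement `ℋ(d)`:
`sgn (f(d,e)(θ)) = sgn (f(d,e)(ω))` for every `e ∈ S_d`. -/
def SameFacet (φ : I → 𝒜 → ℤ) (d : I → ℕ) (θ ω : I → ℝ) : Prop :=
  ∀ e : I → ℕ, MemSd φ d e →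
    Real.sign (muSlopeVec θ d - muSlopeVec θ e) =
      Real.sign (muSlopeVec ω d - muSlopeVec ω e)

lemma sign_mono_aux {x y : ℝ} (h : Real.sign x = Real.sign y) (hy : 0 ≤ y) : 0 ≤ x := by
  by_contra hx
  push_neg at hx
  rw [Real.sign_of_neg hx] at h
  rcases hy.eq_or_lt with h0 | h0
  · rw [← h0, Real.sign_zero] at h; norm_num at h
  · rw [Real.sign_of_pos h0] at h; norm_num at h

lemma sign_mono_aux' {x y : ℝ} (h : Real.sign x = Real.sign y) (hy : 0 < y) : 0 < x := by
  by_contra hx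
  push_neg at hx
  rw [Real.sign_of_pos hy] at h
  rcases hx.eq_or_lt with h0 | h0
  · rw [h0, Real.sign_zero] at h; norm_num at h
  · rw [Real.sign_of_neg h0] at h; norm_num at h

lemma not_isZero_of_ne_bot {M : 𝒜} {N : Subobject M} (h : N ≠ ⊥) :
    ¬ IsZero ((N : 𝒜)) := by
  intro hz
  apply h
  have h0 : N.arrow = 0 := hz.eq_of_src _ _
  have := (Subobject.mk_eq_bot_iff_zero (f := N.arrow)).2 h0
  rwa [Subobject.mk_arrow] at this

lemma muSlope_eq_vec (φ : I → 𝒜 → ℤ) (θ : I → ℝ) (X : 𝒜) (e : I → ℕ)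
    (h : HasDimVec φ X e) : muSlope φ θ X = muSlopeVec θ e := by
  have h' : ∀ i, ((φ i X : ℤ) : ℝ) = (e i : ℝ) := fun i => by
    rw [h i]; push_cast; ring
  simp only [muSlope, degTheta, rkPhi, muSlopeVec]
  push_cast
  simp only [h']

/-- if `θ` and `ω` lie in the same facet of `ℋ(d)` and `φ(M) = d`, then `M`
is `θ`-semistable iff it is `ω`-semistable, and `θ`-stable iff `ω`-stable. -/
theorem semistable_iff_of_sameFacet [Nonempty I]
    (φ : I → 𝒜 → ℤ) (hadd : IsAdditiveFamily φ) (hpos : IsPositiveFamily φ)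
    (d : I → ℕ) (hd : d ≠ 0) (θ ω : I → ℝ) (hfacet : SameFacet φ d θ ω)
    (M : 𝒜) (hM : HasDimVec φ M d) :
    (Semistable φ θ M ↔ Semistable φ ω M) ∧ (Stable φ θ M ↔ Stable φ ω M) := by
  have hdpos : 0 < ∑ i, (d i : ℝ) := by
    obtain ⟨i, hi⟩ : ∃ i, d i ≠ 0 := by
      by_contra h; push_neg at h; exact hd (funext h)
    exact Finset.sum_pos' (fun j _ => by positivity)
      ⟨i, Finset.mem_univ i, by positivity⟩
  have main : ∀ N : Subobject M, N ≠ ⊥ →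
      ((muSlope φ θ ((N : 𝒜)) ≤ muSlope φ θ M ↔
        muSlope φ ω ((N : 𝒜)) ≤ muSlope φ ω M) ∧
       (muSlope φ θ ((N : 𝒜)) < muSlope φ θ M ↔
        muSlope φ ω ((N : 𝒜)) < muSlope φ ω M)) := by
    intro N hN
    have hNz : ¬ IsZero ((N : 𝒜)) := not_isZero_of_ne_bot hN
    set e : I → ℕ := fun i => (φ i ((N : 𝒜))).toNat with he
    have hNe : HasDimVec φ ((N : 𝒜)) e := fun i =>
      (Int.toNat_of_nonneg (hpos.1 i _)).symm
    have hMv : ∀ ψ : I → ℝ, muSlope φ ψ M = muSlopeVec ψ d := fun ψ =>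
      muSlope_eq_vec φ ψ M d hM
    have hNv : ∀ ψ : I → ℝ, muSlope φ ψ ((N : 𝒜)) = muSlopeVec ψ e := fun ψ =>
      muSlope_eq_vec φ ψ ((N : 𝒜)) e hNe
    have hepos : 0 < ∑ i, (e i : ℝ) := by
      obtain ⟨i, hi⟩ := hpos.2 _ hNz
      have : 0 < e i := by
        have := hNe i
        omega
      exact Finset.sum_pos' (fun j _ => by positivity)
        ⟨i, Finset.mem_univ i, by positivity⟩
    by_cases hq : ∃ q : ℚ, ∀ i, (e i : ℚ) = q * (d i : ℚ)
    · obtain ⟨q, hqe⟩ := hq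
      have hqr : ∀ i, (e i : ℝ) = (q : ℝ) * (d i : ℝ) := fun i => by
        exact_mod_cast congrArg (fun x : ℚ => (x : ℝ)) (hqe i)
      have hq0 : (q : ℝ) ≠ 0 := by
        intro h0
        have : ∑ i, (e i : ℝ) = 0 := by
          rw [Finset.sum_congr rfl fun i _ => hqr i, ← Finset.mul_sum, h0, zero_mul]
        linarith
      have eqslope : ∀ ψ : I → ℝ, muSlopeVec ψ e = muSlopeVec ψ d := by
        intro ψ
        unfold muSlopeVec
        have h1 : ∑ i, ψ i * (e i : ℝ) = (q : ℝ) * ∑ i, ψ i * (d i : ℝ) := by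
          rw [Finset.mul_sum]
          exact Finset.sum_congr rfl fun i _ => by rw [hqr i]; ring
        have h2 : ∑ i, (e i : ℝ) = (q : ℝ) * ∑ i, (d i : ℝ) := by
          rw [Finset.mul_sum]
          exact Finset.sum_congr rfl fun i _ => hqr i
        rw [h1, h2, mul_div_mul_left _ _ hq0]
      constructor
      · rw [hMv θ, hMv ω, hNv θ, hNv ω, eqslope θ, eqslope ω]
        exact ⟨fun _ => le_rfl, fun _ => le_rfl⟩
      · rw [hMv θ, hMv ω, hNv θ, hNv ω, eqslope θ, eqslope ω]
        exact ⟨fun h' => absurd h' (lt_irrefl _), fun h' => absurd h' (lt_irrefl _)⟩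
    · have hmem : MemSd φ d e := ⟨hq, M, N, hM, hNe⟩
      have hsgn := hfacet e hmem
      constructor
      · rw [hMv θ, hMv ω, hNv θ, hNv ω, ← sub_nonneg,
          ← sub_nonneg (b := muSlopeVec ω e)]
        exact ⟨fun h => sign_mono_aux hsgn.symm h, fun h => sign_mono_aux hsgn h⟩
      · rw [hMv θ, hMv ω, hNv θ, hNv ω, ← sub_pos, ← sub_pos (b := muSlopeVec ω e)]
        exact ⟨fun h => sign_mono_aux' hsgn.symm h, fun h => sign_mono_aux' hsgn h⟩
  constructor
  · constructor <;> rintro ⟨hMz, h⟩ <;> refine ⟨hMz, fun N hb ht => ?_⟩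
    · exact (main N hb).1.mp (h N hb ht)
    · exact (main N hb).1.mpr (h N hb ht)
  · constructor <;> rintro ⟨hMz, h⟩ <;> refine ⟨hMz, fun N hb ht => ?_⟩
    · exact (main N hb).2.mp (h N hb ht)
    · exact (main N hb).2.mpr (h N hb ht)
end

section
/- Let θ ∈ ℚ^{Q₀} be a rational weight, (V,ρ) a nonzero complex representation of Q, and h an Einstein–Hermitian metric on (V,ρ) with respect to θ. Then the following are equivalent: (1) h is irreducible; (2) (V,ρ) is θ-stable; (3) (V,ρ) is Schur, i.e. every endomorphism of (V,ρ) equals λ·id for some λ ∈ ℂ. -/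
open Module

variable {Q₀ Q₁ : Type*} [Fintype Q₀] [Fintype Q₁] [DecidableEq Q₀]
  (s t : Q₁ → Q₀)
  (V : Q₀ → Type*) [∀ a, NormedAddCommGroup (V a)] [∀ a, InnerProductSpace ℂ (V a)]
  [∀ a, FiniteDimensional ℂ (V a)]

/-- `W` is a subrepresentation of the representation `(V, ρ)` of the quiver
`(Q₀, Q₁, s, t)`. -/
def IsSubrep (ρ : ∀ α, V (s α) →ₗ[ℂ] V (t α)) (W : ∀ a, Submodule ℂ (V a)) : Prop :=
  ∀ α, ∀ x ∈ W (s α), ρ α x ∈ W (t α)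

/-- `f` is an endomorphism of the representation `(V, ρ)`. -/
def IsRepEndo (ρ : ∀ α, V (s α) →ₗ[ℂ] V (t α)) (f : ∀ a, V a →ₗ[ℂ] V a) : Prop :=
  ∀ α, (f (t α)) ∘ₗ (ρ α) = (ρ α) ∘ₗ (f (s α))

/-- The representation `(V, ρ)` is Schur: every endomorphism is a scalar multiple of the
identity. -/
def IsSchurRep (ρ : ∀ α, V (s α) →ₗ[ℂ] V (t α)) : Prop :=
  ∀ f : ∀ a, V a →ₗ[ℂ] V a, IsRepEndo s t V ρ f →
    ∃ c : ℂ, ∀ a, f a = c • LinearMap.id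

/-- `f` is skew-Hermitian with respect to the Hermitian metric given by the inner
products on the `V a`. -/
def IsSkewHermEndo (f : ∀ a, V a →ₗ[ℂ] V a) : Prop :=
  ∀ a, ∀ v w : V a, inner (𝕜 := ℂ) (f a v) w + inner (𝕜 := ℂ) v (f a w) = 0

/-- The Hermitian metric on `(V, ρ)` is irreducible: every skew-Hermitian endomorphism of
`(V, ρ)` is a scalar multiple of the identity. -/
def IsIrreducibleMetric (ρ : ∀ α, V (s α) →ₗ[ℂ] V (t α)) : Prop :=
  ∀ f : ∀ a, V a →ₗ[ℂ] V a, IsRepEndo s t V ρ f → IsSkewHermEndo V f →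
    ∃ c : ℂ, ∀ a, f a = c • LinearMap.id

/-- Two subrepresentations are orthogonal with respect to the Hermitian metric. -/
def OrthSubreps (W W' : ∀ a, Submodule ℂ (V a)) : Prop :=
  ∀ a, ∀ v ∈ W a, ∀ w ∈ W' a, inner (𝕜 := ℂ) v w = (0 : ℂ)

/-- The `θ`-slope of the representation `(V, ρ)`. -/
noncomputable def repSlope (θ : Q₀ → ℝ) : ℝ :=
  (∑ a, θ a * (finrank ℂ (V a) : ℝ)) / (∑ a, (finrank ℂ (V a) : ℝ))

/-- The `θ`-slope of a subrepresentation `W`. -/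
noncomputable def subSlope (θ : Q₀ → ℝ) (W : ∀ a, Submodule ℂ (V a)) : ℝ :=
  (∑ a, θ a * (finrank ℂ (W a) : ℝ)) / (∑ a, (finrank ℂ (W a) : ℝ))

/-- The representation `(V, ρ)` is `θ`-stable: it is nonzero and every nonzero proper
subrepresentation has strictly smaller `θ`-slope. -/
noncomputable def IsStableRep (ρ : ∀ α, V (s α) →ₗ[ℂ] V (t α)) (θ : Q₀ → ℝ) : Prop :=
  (0 < ∑ a, finrank ℂ (V a)) ∧
  ∀ W : ∀ a, Submodule ℂ (V a), IsSubrep s t V ρ W →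
    (∃ a, W a ≠ ⊥) → (∃ a, W a ≠ ⊤) → subSlope V θ W < repSlope V θ

/-- The subrepresentation `W` of `(V, ρ)` is `θ`-stable as a representation in its own
right: it is nonzero and every nonzero proper subrepresentation of it (i.e. every
subrepresentation of `(V, ρ)` contained in `W`) has strictly smaller `θ`-slope. -/
noncomputable def IsStableSubrep (ρ : ∀ α, V (s α) →ₗ[ℂ] V (t α)) (θ : Q₀ → ℝ)
    (W : ∀ a, Submodule ℂ (V a)) : Prop :=
  (∃ a, W a ≠ ⊥) ∧
  ∀ W' : ∀ a, Submodule ℂ (V a), IsSubrep s t V ρ W' → (∀ a, W' a ≤ W a) →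
    (∃ a, W' a ≠ ⊥) → W' ≠ W → subSlope V θ W' < subSlope V θ W

/-- The summand `ρ_α ∘ ρ_α*` of `K_θ(V,ρ,h)_a`, for an arrow `α` with target `a`. -/
noncomputable def tTerm (ρ : ∀ α, V (s α) →ₗ[ℂ] V (t α)) (a : Q₀)
    (α : {α : Q₁ // t α = a}) : Module.End ℂ (V a) :=
  α.2 ▸ ((ρ α.1) ∘ₗ (LinearMap.adjoint (ρ α.1)))

/-- The summand `ρ_α* ∘ ρ_α` of `K_θ(V,ρ,h)_a`, for an arrow `α` with source `a`. -/
noncomputable def sTerm (ρ : ∀ α, V (s α) →ₗ[ℂ] V (t α)) (a : Q₀)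
    (α : {α : Q₁ // s α = a}) : Module.End ℂ (V a) :=
  α.2 ▸ ((LinearMap.adjoint (ρ α.1)) ∘ₗ (ρ α.1))

/-- The endomorphism `K_θ(V,ρ,h)_a = θ_a id + ∑_{t(α)=a} ρ_α ρ_α* − ∑_{s(α)=a} ρ_α* ρ_α`
of `V a`. -/
noncomputable def Kop (ρ : ∀ α, V (s α) →ₗ[ℂ] V (t α)) (θ : Q₀ → ℝ) (a : Q₀) :
    Module.End ℂ (V a) :=
  ((θ a : ℂ)) • (LinearMap.id : V a →ₗ[ℂ] V a) +
    (∑ α : {α : Q₁ // t α = a}, tTerm s t V ρ a α) -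
    (∑ α : {α : Q₁ // s α = a}, sTerm s t V ρ a α)

/-- The Hermitian metric `h` on `(V, ρ)` is Einstein–Hermitian with respect to `θ`:
`K_θ(V,ρ,h)_a = c • id` for all `a`, for some constant `c ∈ ℂ`. -/
noncomputable def IsEinsteinHermitian (ρ : ∀ α, V (s α) →ₗ[ℂ] V (t α)) (θ : Q₀ → ℝ) :
    Prop :=
  ∃ c : ℂ, ∀ a, Kop s t V ρ θ a = c • (LinearMap.id : V a →ₗ[ℂ] V a)


/-!
For a subrepresentation `W` with orthogonal projections `π`, `∑ₐ tr(πₐ K_θ,ₐ)` equals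
`deg_θ W + ∑_α ‖π ρ_α - ρ_α π‖²` (Hilbert–Schmidt norm), while the Einstein–Hermitian condition
makes it `c · rk W`, and `W = V` shows `c = μ_θ(V)`. Hence `μ_θ(W) ≤ μ_θ(V)`, with equality only
if `π` commutes with `ρ`; then `I • π` is a skew-Hermitian endomorphism, so irreducibility forces
`π` to be scalar, i.e. `W = 0` or `W = V`. Conversely, in a stable representation the kernel and
the image of `f - λ`, for an eigenvalue `λ` of an endomorphism `f`, cannot both be nonzero proper
subrepresentations, since their slopes average to `μ_θ(V)`; so `f = λ`. Schur representations
have irreducible metrics trivially.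
-/

open LinearMap

section InnerProductSpace

variable {𝕜 E F : Type*} [RCLike 𝕜]
  [NormedAddCommGroup E] [InnerProductSpace 𝕜 E] [FiniteDimensional 𝕜 E]
  [NormedAddCommGroup F] [InnerProductSpace 𝕜 F] [FiniteDimensional 𝕜 F]

theorem LinearMap.re_trace_adjoint_comp_self {ι : Type*} [Fintype ι] (B : E →ₗ[𝕜] F)
    (b : OrthonormalBasis ι 𝕜 E) :
    RCLike.re (trace 𝕜 E (adjoint B ∘ₗ B)) = ∑ i, ‖B (b i)‖ ^ 2 := by
  simp [trace_eq_sum_inner _ b, adjoint_inner_right]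

theorem LinearMap.re_trace_adjoint_comp_self_nonneg (B : E →ₗ[𝕜] F) :
    0 ≤ RCLike.re (trace 𝕜 E (adjoint B ∘ₗ B)) := by
  rw [re_trace_adjoint_comp_self B (stdOrthonormalBasis 𝕜 E)]
  positivity

theorem LinearMap.re_trace_adjoint_comp_self_pos {B : E →ₗ[𝕜] F} (hB : B ≠ 0) :
    0 < RCLike.re (trace 𝕜 E (adjoint B ∘ₗ B)) := by
  let b := stdOrthonormalBasis 𝕜 E
  obtain ⟨i, hi⟩ : ∃ i, B (b i) ≠ 0 := by
    by_contra! h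
    exact hB (b.toBasis.ext fun i => by simpa using h i)
  rw [re_trace_adjoint_comp_self B b]
  exact Finset.sum_pos' (fun _ _ => by positivity) ⟨i, Finset.mem_univ i, by positivity⟩

theorem Submodule.trace_starProjection (K : Submodule 𝕜 E) :
    trace 𝕜 E K.starProjection = finrank 𝕜 K := by
  have h : (K.orthogonalProjectionOnto : E →ₗ[𝕜] K) ∘ₗ K.subtype = LinearMap.id := by
    ext x; simp
  rw [Submodule.starProjection, ContinuousLinearMap.toLinearMap_comp, trace_comp_comm']
  simp [h]

theorem Submodule.eq_one_of_starProjection_eq_smul_id {K : Submodule 𝕜 E} (hK : K ≠ ⊥) {c : 𝕜}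
    (h : (K.starProjection : E →ₗ[𝕜] E) = c • LinearMap.id) : c = 1 := by
  obtain ⟨x, hxK, hx⟩ := (Submodule.ne_bot_iff K).mp hK
  have hcx : c • x = x :=
    (by simpa using (LinearMap.congr_fun h x).symm : c • x = K.starProjection x).trans
      (K.starProjection_eq_self_iff.mpr hxK)
  exact (smul_left_injective 𝕜 hx).eq_iff.mp (hcx.trans (one_smul 𝕜 x).symm)

theorem trace_adjoint_comp_self_starProjection_comp_sub (X : E →ₗ[𝕜] F) {W : Submodule 𝕜 E}
    {U : Submodule 𝕜 F} (hX : ∀ x ∈ W, X x ∈ U) :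
    trace 𝕜 E (adjoint (↑U.starProjection ∘ₗ X - X ∘ₗ ↑W.starProjection) ∘ₗ
        (↑U.starProjection ∘ₗ X - X ∘ₗ ↑W.starProjection)) =
      trace 𝕜 F (↑U.starProjection ∘ₗ X ∘ₗ adjoint X) -
        trace 𝕜 E (↑W.starProjection ∘ₗ adjoint X ∘ₗ X) := by
  set P : F →ₗ[𝕜] F := ↑U.starProjection
  set Q : E →ₗ[𝕜] E := ↑W.starProjection
  have hPXQ : P ∘ₗ X ∘ₗ Q = X ∘ₗ Q := by
    ext x; exact U.starProjection_eq_self_iff.mpr (hX _ (W.starProjection_apply_mem x))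
  have hPP : P ∘ₗ P = P :=
    ContinuousLinearMap.IsIdempotentElem.toLinearMap U.isIdempotentElem_starProjection
  have hQQ : Q ∘ₗ Q = Q :=
    ContinuousLinearMap.IsIdempotentElem.toLinearMap W.isIdempotentElem_starProjection
  have hB : adjoint (P ∘ₗ X - X ∘ₗ Q) = adjoint X ∘ₗ P - Q ∘ₗ adjoint X := by
    rw [map_sub, adjoint_comp, adjoint_comp, U.starProjection_isSymmetric.adjoint_eq,
      W.starProjection_isSymmetric.adjoint_eq]
  have t1 : trace 𝕜 E ((adjoint X ∘ₗ P) ∘ₗ P ∘ₗ X) = trace 𝕜 F (P ∘ₗ X ∘ₗ adjoint X) := by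
    rw [comp_assoc, ← comp_assoc X P P, hPP, trace_comp_comm', comp_assoc]
  have t2 : trace 𝕜 E ((adjoint X ∘ₗ P) ∘ₗ X ∘ₗ Q) = trace 𝕜 E (Q ∘ₗ adjoint X ∘ₗ X) := by
    rw [comp_assoc, hPXQ, ← comp_assoc, trace_comp_comm']
  have t3 : trace 𝕜 E ((Q ∘ₗ adjoint X) ∘ₗ P ∘ₗ X) = trace 𝕜 E (Q ∘ₗ adjoint X ∘ₗ X) := by
    rw [comp_assoc, trace_comp_comm', comp_assoc, comp_assoc, hPXQ, ← comp_assoc,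
      trace_comp_comm']
  have t4 : trace 𝕜 E ((Q ∘ₗ adjoint X) ∘ₗ X ∘ₗ Q) = trace 𝕜 E (Q ∘ₗ adjoint X ∘ₗ X) := by
    rw [← comp_assoc, trace_comp_comm', ← comp_assoc, ← comp_assoc (adjoint X) Q Q, hQQ,
      comp_assoc]
  rw [hB, sub_comp, comp_sub, comp_sub, map_sub, map_sub, map_sub, t1, t2, t3, t4]
  ring

end InnerProductSpace

section Quiver

variable {Q₀ Q₁ : Type*} {s t : Q₁ → Q₀} {V : Q₀ → Type*} [∀ a, NormedAddCommGroup (V a)]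
  [∀ a, InnerProductSpace ℂ (V a)] {ρ : ∀ α, V (s α) →ₗ[ℂ] V (t α)}

theorem IsRepEndo.isSubrep_ker {f : ∀ a, V a →ₗ[ℂ] V a} (hf : IsRepEndo s t V ρ f) :
    IsSubrep s t V ρ fun a => ker (f a) := by
  intro α x hx
  rw [mem_ker] at hx ⊢
  rw [← comp_apply, hf α, comp_apply, hx, map_zero]

theorem IsRepEndo.isSubrep_range {f : ∀ a, V a →ₗ[ℂ] V a} (hf : IsRepEndo s t V ρ f) :
    IsSubrep s t V ρ fun a => range (f a) := by
  rintro α _ ⟨x, rfl⟩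
  exact ⟨ρ α x, LinearMap.congr_fun (hf α) x⟩

theorem IsRepEndo.sub_smul_id {f : ∀ a, V a →ₗ[ℂ] V a} (hf : IsRepEndo s t V ρ f) (μ : ℂ) :
    IsRepEndo s t V ρ fun a => f a - μ • LinearMap.id := by
  intro α
  rw [sub_comp, comp_sub, hf α, smul_comp, comp_smul, id_comp, comp_id]

theorem IsRepEndo.smul {f : ∀ a, V a →ₗ[ℂ] V a} (hf : IsRepEndo s t V ρ f) (c : ℂ) :
    IsRepEndo s t V ρ fun a => c • f a := by
  intro α
  rw [smul_comp, comp_smul, hf α]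

theorem IsSchurRep.isIrreducibleMetric (h : IsSchurRep s t V ρ) :
    IsIrreducibleMetric s t V ρ :=
  fun f hf _ => h f hf

theorem IsIrreducibleMetric.exists_eq_smul_id_of_isSymmetric (hirr : IsIrreducibleMetric s t V ρ)
    {f : ∀ a, V a →ₗ[ℂ] V a} (hf : IsRepEndo s t V ρ f) (hsymm : ∀ a, (f a).IsSymmetric) :
    ∃ c : ℂ, ∀ a, f a = c • LinearMap.id := by
  have hskew : IsSkewHermEndo V fun a => Complex.I • f a := by
    intro a v w
    rw [LinearMap.smul_apply, LinearMap.smul_apply, inner_smul_left, inner_smul_right,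
      hsymm a v w, Complex.conj_I]
    ring
  obtain ⟨c, hc⟩ := hirr _ (hf.smul Complex.I) hskew
  refine ⟨-Complex.I * c, fun a => ?_⟩
  calc f a = -Complex.I • Complex.I • f a := by simp [smul_smul]
    _ = (-Complex.I * c) • LinearMap.id := by rw [hc a, smul_smul]

variable [∀ a, FiniteDimensional ℂ (V a)]

noncomputable def projCommutator (ρ : ∀ α, V (s α) →ₗ[ℂ] V (t α)) (W : ∀ a, Submodule ℂ (V a))
    (α : Q₁) : V (s α) →ₗ[ℂ] V (t α) :=
  ↑(W (t α)).starProjection ∘ₗ ρ α - ρ α ∘ₗ ↑(W (s α)).starProjection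

theorem projCommutator_top : projCommutator ρ (fun _ => ⊤) = 0 := by
  ext α x
  simp [projCommutator, Submodule.starProjection_top]

theorem IsIrreducibleMetric.exists_projCommutator_ne_zero (hirr : IsIrreducibleMetric s t V ρ)
    {W : ∀ a, Submodule ℂ (V a)} (hW₀ : ∃ a, W a ≠ ⊥) (hW₁ : ∃ a, W a ≠ ⊤) :
    ∃ α, projCommutator ρ W α ≠ 0 := by
  by_contra! h
  obtain ⟨c, hc⟩ := hirr.exists_eq_smul_id_of_isSymmetric
    (f := fun a => ↑(W a).starProjection) (fun α => sub_eq_zero.mp (h α))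
    (fun a => (W a).starProjection_isSymmetric)
  obtain ⟨a₀, ha₀⟩ := hW₀
  obtain ⟨a₁, ha₁⟩ := hW₁
  have hc₁ : c = 1 := Submodule.eq_one_of_starProjection_eq_smul_id ha₀ (hc a₀)
  refine ha₁ (Submodule.eq_top_iff'.mpr fun x => ?_)
  rw [← Submodule.starProjection_eq_self_iff]
  simpa [hc₁] using LinearMap.congr_fun (hc a₁) x

variable [Fintype Q₀]

theorem sum_finrank_pos_of_ne_bot {W : ∀ a, Submodule ℂ (V a)} (hW : ∃ a, W a ≠ ⊥) :
    0 < ∑ a, (finrank ℂ (W a) : ℝ) := by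
  obtain ⟨a, ha⟩ := hW
  exact Finset.sum_pos' (fun _ _ => by positivity)
    ⟨a, Finset.mem_univ a, by simpa [Nat.pos_iff_ne_zero, Submodule.finrank_eq_zero] using ha⟩

theorem repSlope_le_subSlope_of_finrank_add {θ : Q₀ → ℝ} {K R : ∀ a, Submodule ℂ (V a)}
    (hKR : ∀ a, finrank ℂ (K a) + finrank ℂ (R a) = finrank ℂ (V a))
    (hK : ∃ a, K a ≠ ⊥) (hR : ∃ a, R a ≠ ⊥) (hlt : subSlope V θ K < repSlope V θ) :
    repSlope V θ ≤ subSlope V θ R := by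
  have hrK := sum_finrank_pos_of_ne_bot hK
  have hrR := sum_finrank_pos_of_ne_bot hR
  have hV : ∀ a, (finrank ℂ (V a) : ℝ) = finrank ℂ (K a) + finrank ℂ (R a) := fun a => by
    rw [← hKR a, Nat.cast_add]
  simp only [subSlope, repSlope, hV, mul_add, Finset.sum_add_distrib] at hlt ⊢
  rw [div_lt_div_iff₀ hrK (by positivity)] at hlt
  rw [div_le_div_iff₀ (by positivity) hrR]
  linarith

theorem IsStableRep.ker_eq_top_of_ker_ne_bot {θ : Q₀ → ℝ} (hst : IsStableRep s t V ρ θ)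
    {g : ∀ a, V a →ₗ[ℂ] V a} (hg : IsRepEndo s t V ρ g) (hker : ∃ a, ker (g a) ≠ ⊥) :
    ∀ a, ker (g a) = ⊤ := by
  by_contra! hker_ne_top
  obtain ⟨a₀, ha₀⟩ := hker
  obtain ⟨a₁, ha₁⟩ := hker_ne_top
  have hR₀ : ∃ a, range (g a) ≠ ⊥ := ⟨a₁, fun h => ha₁ (ker_eq_top.mpr (range_eq_bot.mp h))⟩
  have hR₁ : ∃ a, range (g a) ≠ ⊤ :=
    ⟨a₀, fun h => ha₀ (ker_eq_bot.mpr (injective_iff_surjective.mpr (range_eq_top.mp h)))⟩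
  have hKR : ∀ a, finrank ℂ (ker (g a)) + finrank ℂ (range (g a)) = finrank ℂ (V a) :=
    fun a => by rw [add_comm, finrank_range_add_finrank_ker]
  exact (hst.2 _ hg.isSubrep_range hR₀ hR₁).not_ge <| repSlope_le_subSlope_of_finrank_add hKR
    ⟨a₀, ha₀⟩ hR₀ (hst.2 _ hg.isSubrep_ker ⟨a₀, ha₀⟩ ⟨a₁, ha₁⟩)

theorem IsStableRep.isSchurRep {θ : Q₀ → ℝ} (hst : IsStableRep s t V ρ θ) :
    IsSchurRep s t V ρ := by
  intro f hf
  obtain ⟨a₀, -, ha₀⟩ := Finset.sum_pos_iff.mp hst.1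
  have : Nontrivial (V a₀) := Module.nontrivial_of_finrank_pos ha₀
  obtain ⟨μ, hμ⟩ := Module.End.exists_eigenvalue (f a₀)
  have hker := hst.ker_eq_top_of_ker_ne_bot (hf.sub_smul_id μ)
    ⟨a₀, by simpa [Module.End.hasEigenvalue_iff, Module.End.eigenspace_def,
      Module.End.one_eq_id] using hμ⟩
  exact ⟨μ, fun a => sub_eq_zero.mp (ker_eq_top.mp (hker a))⟩

variable [Fintype Q₁] [DecidableEq Q₀]

theorem sum_trace_comp_Kop (θ : Q₀ → ℝ) (P : ∀ a, Module.End ℂ (V a)) :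
    ∑ a, trace ℂ (V a) (P a ∘ₗ Kop s t V ρ θ a) =
      ∑ a, (θ a : ℂ) * trace ℂ (V a) (P a) +
        ∑ α, (trace ℂ (V (t α)) (P (t α) ∘ₗ ρ α ∘ₗ adjoint (ρ α)) -
          trace ℂ (V (s α)) (P (s α) ∘ₗ adjoint (ρ α) ∘ₗ ρ α)) := by
  have htarget : ∀ a (α : {α // t α = a}), trace ℂ (V a) (P a ∘ₗ tTerm s t V ρ a α) =
      trace ℂ (V (t α)) (P (t α) ∘ₗ ρ α ∘ₗ adjoint (ρ α)) := by
    rintro _ ⟨α, rfl⟩; rfl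
  have hsource : ∀ a (α : {α // s α = a}), trace ℂ (V a) (P a ∘ₗ sTerm s t V ρ a α) =
      trace ℂ (V (s α)) (P (s α) ∘ₗ adjoint (ρ α) ∘ₗ ρ α) := by
    rintro _ ⟨α, rfl⟩; rfl
  have hexpand : ∀ a, P a ∘ₗ Kop s t V ρ θ a = (θ a : ℂ) • P a +
      ∑ α, P a ∘ₗ tTerm s t V ρ a α - ∑ α, P a ∘ₗ sTerm s t V ρ a α := by
    intro a
    simp only [Kop, ← Module.End.mul_eq_comp, ← Module.End.one_eq_id, mul_add, mul_sub,
      Finset.mul_sum, mul_smul_comm, mul_one]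
  simp only [hexpand, map_add, map_sub, map_smul, map_sum, htarget, hsource,
    Finset.sum_add_distrib, Finset.sum_sub_distrib, smul_eq_mul]
  rw [Fintype.sum_fiberwise t fun α => trace ℂ (V (t α)) (P (t α) ∘ₗ ρ α ∘ₗ adjoint (ρ α)),
    Fintype.sum_fiberwise s fun α => trace ℂ (V (s α)) (P (s α) ∘ₗ adjoint (ρ α) ∘ₗ ρ α),
    add_sub_assoc]

theorem IsSubrep.sum_trace_starProjection_comp_Kop {W : ∀ a, Submodule ℂ (V a)}
    (hW : IsSubrep s t V ρ W) (θ : Q₀ → ℝ) :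
    ∑ a, trace ℂ (V a) (↑(W a).starProjection ∘ₗ Kop s t V ρ θ a) =
      ∑ a, (θ a : ℂ) * finrank ℂ (W a) +
        ∑ α, trace ℂ (V (s α)) (adjoint (projCommutator ρ W α) ∘ₗ projCommutator ρ W α) := by
  simp only [sum_trace_comp_Kop, Submodule.trace_starProjection, projCommutator,
    trace_adjoint_comp_self_starProjection_comp_sub (ρ _) (hW _)]

theorem IsEinsteinHermitian.repSlope_mul_sum_finrank {θ : Q₀ → ℝ}
    (hEH : IsEinsteinHermitian s t V ρ θ) (hnz : 0 < ∑ a, finrank ℂ (V a))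
    {W : ∀ a, Submodule ℂ (V a)} (hW : IsSubrep s t V ρ W) :
    repSlope V θ * ∑ a, (finrank ℂ (W a) : ℝ) = ∑ a, θ a * finrank ℂ (W a) + ∑ α, RCLike.re
      (trace ℂ (V (s α)) (adjoint (projCommutator ρ W α) ∘ₗ projCommutator ρ W α)) := by
  obtain ⟨c, hc⟩ := hEH
  have key : ∀ W, IsSubrep s t V ρ W → c.re * ∑ a, (finrank ℂ (W a) : ℝ) =
      ∑ a, θ a * finrank ℂ (W a) + ∑ α, RCLike.re
        (trace ℂ (V (s α)) (adjoint (projCommutator ρ W α) ∘ₗ projCommutator ρ W α)) := by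
    intro W hW
    have h := congrArg Complex.re (hW.sum_trace_starProjection_comp_Kop θ)
    simpa [hc, Submodule.trace_starProjection, Finset.mul_sum, comp_smul] using h
  have hc_re : c.re = repSlope V θ := by
    have hV := key (fun _ => ⊤) fun _ _ _ => trivial
    simp only [projCommutator_top, finrank_top] at hV
    rw [repSlope, eq_div_iff (by exact_mod_cast hnz.ne')]
    simpa using hV
  rw [← hc_re]
  exact key W hW

theorem IsIrreducibleMetric.isStableRep {θ : Q₀ → ℝ} (hirr : IsIrreducibleMetric s t V ρ)
    (hEH : IsEinsteinHermitian s t V ρ θ) (hnz : 0 < ∑ a, finrank ℂ (V a)) :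
    IsStableRep s t V ρ θ := by
  refine ⟨hnz, fun W hW hW₀ hW₁ => ?_⟩
  obtain ⟨α, hα⟩ := hirr.exists_projCommutator_ne_zero hW₀ hW₁
  have hdefect : 0 < ∑ α, RCLike.re
      (trace ℂ (V (s α)) (adjoint (projCommutator ρ W α) ∘ₗ projCommutator ρ W α)) :=
    Finset.sum_pos' (fun _ _ => re_trace_adjoint_comp_self_nonneg _)
      ⟨α, Finset.mem_univ α, re_trace_adjoint_comp_self_pos hα⟩
  rw [subSlope, div_lt_iff₀ (sum_finrank_pos_of_ne_bot hW₀)]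
  linarith [hEH.repSlope_mul_sum_finrank hnz hW]

end Quiver

theorem irreducible_iff_stable_iff_schur_general
    {Q₀ Q₁ : Type*} [Fintype Q₀] [Fintype Q₁] [DecidableEq Q₀]
    (s t : Q₁ → Q₀)
    (V : Q₀ → Type*) [∀ a, NormedAddCommGroup (V a)] [∀ a, InnerProductSpace ℂ (V a)]
    [∀ a, FiniteDimensional ℂ (V a)]
    (ρ : ∀ α, V (s α) →ₗ[ℂ] V (t α))
    (θ : Q₀ → ℚ)
    (hnz : 0 < ∑ a, Module.finrank ℂ (V a))
    (hEH : IsEinsteinHermitian s t V ρ (fun a => (θ a : ℝ))) :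
    (IsIrreducibleMetric s t V ρ ↔ IsStableRep s t V ρ (fun a => (θ a : ℝ))) ∧
    (IsStableRep s t V ρ (fun a => (θ a : ℝ)) ↔ IsSchurRep s t V ρ) :=
  ⟨⟨fun h => h.isStableRep hEH hnz, fun h => h.isSchurRep.isIrreducibleMetric⟩,
    ⟨IsStableRep.isSchurRep, fun h => h.isIrreducibleMetric.isStableRep hEH hnz⟩⟩

/-- for a rational weight `θ`, a nonzero representation `(V, ρ)` and an
Einstein–Hermitian metric `h` on it with respect to `θ` (the metric being given by the
inner products on the `V a`), the following are equivalent: `h` is irreducible; `(V, ρ)`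
is `θ`-stable; `(V, ρ)` is Schur. -/
theorem irreducible_iff_stable_iff_schur
    {Q₀ Q₁ : Type*} [Fintype Q₀] [Fintype Q₁] [Nonempty Q₀] [DecidableEq Q₀]
    (s t : Q₁ → Q₀)
    (V : Q₀ → Type*) [∀ a, NormedAddCommGroup (V a)] [∀ a, InnerProductSpace ℂ (V a)]
    [∀ a, FiniteDimensional ℂ (V a)]
    (ρ : ∀ α, V (s α) →ₗ[ℂ] V (t α))
    (θ : Q₀ → ℚ)
    (hnz : 0 < ∑ a, Module.finrank ℂ (V a))
    (hEH : IsEinsteinHermitian s t V ρ (fun a => (θ a : ℝ))) :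
    (IsIrreducibleMetric s t V ρ ↔ IsStableRep s t V ρ (fun a => (θ a : ℝ))) ∧
    (IsStableRep s t V ρ (fun a => (θ a : ℝ)) ↔ IsSchurRep s t V ρ) :=
  irreducible_iff_stable_iff_schur_general s t V ρ θ hnz hEH
end
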